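/- arXiv:1204.3060 — 4 statements merged into one kernel-verified Lean document; each statement's English description precedes it below -/
import Mathlib

section
/- Let n ≥ 2 and let G be a graph on n vertices with minimum degree at least 1. Then the total number of independent sets in G satisfies i(G) ≤ i(K_{1,n-1}) = 2^{n-1} + 1. -/
open SimpleGraph

/-- `indepT G t` is the number of independent sets of size `t` in `G`,
i.e. the number of `t`-element vertex subsets spanning no edge. -/
noncomputable def indepT {V : Type*} [Fintype V] (G : SimpleGraph V) (t : ℕ) : ℕ :=
  Nat.card {s : Finset V // s.card = t ∧ ∀ u ∈ s, ∀ v ∈ s, ¬ G.Adj u v}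

/-- `indepAll G` is the total number of independent sets in `G` (including `∅`). -/
noncomputable def indepAll {V : Type*} [Fintype V] (G : SimpleGraph V) : ℕ :=
  Nat.card {s : Finset V // ∀ u ∈ s, ∀ v ∈ s, ¬ G.Adj u v}

/-- The degree of a vertex, as the cardinality of its neighbour set. -/
noncomputable def gdeg {V : Type*} (G : SimpleGraph V) (v : V) : ℕ :=
  (G.neighborSet v).ncard

/-!
Induction on the vertex set `A` of an induced subgraph without isolated vertices. If some
vertex `u` can be deleted without creating an isolated vertex, split the independent sets by
whether they contain `u`: those that do avoid a neighbour `v` of `u`, so there are at most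
`2^(|A|-2)` of them, and induction bounds the others by `2^(|A|-2) + 1`. Otherwise every vertex
is the unique neighbour of some vertex, which forces an edge `xy` forming a component of its own;
then `i(A) ≤ i(K₂) · i(A \ {x,y}) = 3 · i(A \ {x,y})`, and `3 (2^(m-1) + 1) ≤ 2^(m+1) + 1` as soon
as `m ≥ 2`.
-/

open Finset

namespace SimpleGraph

variable {V : Type*} (G : SimpleGraph V)

def NoIsolatedIn (A : Finset V) : Prop :=
  ∀ v ∈ A, ∃ w ∈ A, G.Adj v w

namespace NoIsolatedIn

variable {G} {A : Finset V}

lemma two_le_card (hA : G.NoIsolatedIn A) (hne : A.Nonempty) : 2 ≤ #A := by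
  obtain ⟨v, hv⟩ := hne
  obtain ⟨w, hw, hvw⟩ := hA v hv
  exact one_lt_card.2 ⟨v, hv, w, hw, hvw.ne⟩

variable [DecidableEq V]

lemma exists_only_neighbor_of_not_erase {u : V} (hu : ¬ G.NoIsolatedIn (A.erase u)) :
    ∃ y ∈ A, ∀ w ∈ A, G.Adj y w → w = u := by
  simp only [NoIsolatedIn, not_forall, not_exists, not_and] at hu
  obtain ⟨y, hy, hisol⟩ := hu
  exact ⟨y, mem_of_mem_erase hy, fun w hw hyw =>
    by_contra fun hwu => hisol w (mem_erase.2 ⟨hwu, hw⟩) hyw⟩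

lemma exists_isolated_edge (hA : G.NoIsolatedIn A) (hne : A.Nonempty)
    (h : ∀ u ∈ A, ¬ G.NoIsolatedIn (A.erase u)) :
    ∃ x y, G.Adj x y ∧ {x, y} ⊆ A ∧ G.NoIsolatedIn (A \ {x, y}) := by
  obtain ⟨x, hx⟩ := hne
  obtain ⟨y, hy, hy_only⟩ := exists_only_neighbor_of_not_erase (h x hx)
  obtain ⟨z, hz, hz_only⟩ := exists_only_neighbor_of_not_erase (h y hy)
  have hyx : G.Adj y x := by
    obtain ⟨w, hw, hyw⟩ := hA y hy
    rwa [← hy_only w hw hyw]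
  have hzx : z = x := by
    obtain ⟨w, hw, hzw⟩ := hA z hz
    exact hy_only z hz (hz_only w hw hzw ▸ hzw).symm
  subst hzx
  refine ⟨z, y, hyx.symm, insert_subset hx (singleton_subset_iff.2 hy), fun v hv => ?_⟩
  simp only [mem_sdiff, mem_insert, mem_singleton, not_or] at hv
  obtain ⟨hvA, hvz, hvy⟩ := hv
  obtain ⟨w, hw, hvw⟩ := hA v hvA
  refine ⟨w, ?_, hvw⟩
  simp only [mem_sdiff, mem_insert, mem_singleton, not_or]
  refine ⟨hw, ?_, ?_⟩
  · rintro rfl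
    exact hvy (hz_only v hvA hvw.symm)
  · rintro rfl
    exact hvz (hy_only v hvA hvw.symm)

end NoIsolatedIn

variable [DecidableRel G.Adj]

def indepSetsIn (A : Finset V) : Finset (Finset V) :=
  A.powerset.filter fun s => ∀ u ∈ s, ∀ v ∈ s, ¬ G.Adj u v

variable {G}

lemma mem_indepSetsIn {A s : Finset V} :
    s ∈ G.indepSetsIn A ↔ s ⊆ A ∧ ∀ u ∈ s, ∀ v ∈ s, ¬ G.Adj u v := by
  simp [indepSetsIn]

lemma card_indepSetsIn_empty : #(G.indepSetsIn ∅) = 1 := by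
  simp [indepSetsIn, filter_singleton]

variable [DecidableEq V]

lemma card_indepSetsIn_le_mul (A S : Finset V) :
    #(G.indepSetsIn A) ≤ #(G.indepSetsIn S) * #(G.indepSetsIn (A \ S)) := by
  rw [← card_product]
  refine card_le_card_of_injOn (fun s => (s ∩ S, s \ S)) (fun s hs => ?_) (fun s _ t _ h => ?_)
  · rw [mem_coe, mem_indepSetsIn] at hs
    simp only [mem_coe, mem_product, mem_indepSetsIn]
    exact ⟨⟨inter_subset_right, fun u hu v hv =>
        hs.2 u (mem_of_mem_inter_left hu) v (mem_of_mem_inter_left hv)⟩,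
      ⟨sdiff_subset_sdiff hs.1 le_rfl, fun u hu v hv =>
        hs.2 u (mem_sdiff.1 hu).1 v (mem_sdiff.1 hv).1⟩⟩
  · simp only [Prod.mk.injEq] at h
    rw [← sdiff_union_inter s S, ← sdiff_union_inter t S, h.1, h.2]

lemma card_indepSetsIn_pair_le {x y : V} (hxy : G.Adj x y) : #(G.indepSetsIn {x, y}) ≤ 3 := by
  have hsub : G.indepSetsIn {x, y} ⊆ ({x, y} : Finset V).powerset.erase {x, y} := by
    intro s hs
    rw [mem_indepSetsIn] at hs
    refine mem_erase.2 ⟨?_, mem_powerset.2 hs.1⟩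
    rintro rfl
    exact hs.2 x (by simp) y (by simp) hxy
  calc #(G.indepSetsIn {x, y}) ≤ _ := card_le_card hsub
    _ = 3 := by rw [card_erase_of_mem (mem_powerset_self _), card_powerset, card_pair hxy.ne]; rfl

lemma card_indepSetsIn_le_erase_add {A : Finset V} {u v : V} (hu : u ∈ A) (hv : v ∈ A)
    (huv : G.Adj u v) :
    #(G.indepSetsIn A) ≤ #(G.indepSetsIn (A.erase u)) + 2 ^ (#A - 2) := by
  rw [← card_filter_add_card_filter_not (fun s => u ∈ s), add_comm]
  gcongr
  · intro s hs
    rw [mem_filter, mem_indepSetsIn] at hs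
    exact mem_indepSetsIn.2 ⟨subset_erase.2 ⟨hs.1.1, hs.2⟩, hs.1.2⟩
  · calc #((G.indepSetsIn A).filter (fun s => u ∈ s))
        ≤ #((A.erase u).erase v).powerset :=
          card_le_card_of_injOn (·.erase u) (fun s hs => ?_)
            (fun s hs t ht => erase_injOn' u (mem_filter.1 hs).2 (mem_filter.1 ht).2)
      _ = 2 ^ (#A - 2) := by
          rw [card_powerset, card_erase_of_mem (mem_erase.2 ⟨huv.ne', hv⟩),
            card_erase_of_mem hu, Nat.sub_sub]
    rw [mem_coe, mem_filter, mem_indepSetsIn] at hs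
    refine mem_powerset.2 fun a ha => ?_
    obtain ⟨hau, has⟩ := mem_erase.1 ha
    have hav : a ≠ v := by
      rintro rfl
      exact hs.1.2 u hs.2 a has huv
    exact mem_erase.2 ⟨hav, mem_erase.2 ⟨hau, hs.1.1 has⟩⟩

theorem card_indepSetsIn_le (A : Finset V) (hA : G.NoIsolatedIn A) (hne : A.Nonempty) :
    #(G.indepSetsIn A) ≤ 2 ^ (#A - 1) + 1 := by
  induction A using Finset.strongInduction with
  | H A ih =>
  by_cases h : ∃ u ∈ A, G.NoIsolatedIn (A.erase u)
  · obtain ⟨u, hu, hA'⟩ := h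
    obtain ⟨v, hv, huv⟩ := hA u hu
    have ih' := ih _ (erase_ssubset hu) hA' ⟨v, mem_erase.2 ⟨huv.ne', hv⟩⟩
    obtain ⟨m, hm⟩ := Nat.exists_eq_add_of_le' (hA.two_le_card hne)
    have hm' : #(A.erase u) - 1 = m := by rw [card_erase_of_mem hu]; omega
    calc #(G.indepSetsIn A) ≤ #(G.indepSetsIn (A.erase u)) + 2 ^ (#A - 2) :=
          card_indepSetsIn_le_erase_add hu hv huv
      _ ≤ (2 ^ m + 1) + 2 ^ m := by
          rw [hm'] at ih'; rw [hm, Nat.add_sub_cancel]; exact Nat.add_le_add_right ih' _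
      _ = 2 ^ (#A - 1) + 1 := by rw [hm, Nat.add_sub_assoc (by norm_num), pow_succ]; ring
  · push Not at h
    obtain ⟨x, y, hxy, hxyA, hB⟩ := hA.exists_isolated_edge hne h
    have hcard : #A = #(A \ {x, y}) + 2 := by
      rw [card_sdiff_of_subset hxyA, card_pair hxy.ne, Nat.sub_add_cancel (hA.two_le_card hne)]
    have hsplit : #(G.indepSetsIn A) ≤ 3 * #(G.indepSetsIn (A \ {x, y})) :=
      (card_indepSetsIn_le_mul A {x, y}).trans
        (Nat.mul_le_mul_right _ (card_indepSetsIn_pair_le hxy))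
    rcases (A \ {x, y}).eq_empty_or_nonempty with hB0 | hBne
    · rw [hB0, card_indepSetsIn_empty] at hsplit
      rw [hcard, hB0]
      exact hsplit
    · have ih' := ih _ (sdiff_ssubset hxyA (insert_nonempty x {y})) hB hBne
      obtain ⟨m, hm⟩ := Nat.exists_eq_add_of_le' (hB.two_le_card hBne)
      have hA1 : #A - 1 = m + 3 := by omega
      have hB1 : #(A \ {x, y}) - 1 = m + 1 := by omega
      have hpos : 1 ≤ 2 ^ m := Nat.one_le_two_pow
      calc #(G.indepSetsIn A) ≤ 3 * #(G.indepSetsIn (A \ {x, y})) := hsplit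
        _ ≤ 3 * (2 ^ (m + 1) + 1) := by rw [hB1] at ih'; exact Nat.mul_le_mul_left _ ih'
        _ ≤ 2 ^ (#A - 1) + 1 := by rw [hA1, pow_succ, pow_succ, pow_succ]; omega

lemma indepAll_eq_card_indepSetsIn [Fintype V] : indepAll G = #(G.indepSetsIn univ) := by
  rw [indepAll, Nat.card_eq_fintype_card, Fintype.card_subtype]
  congr 1
  ext s
  simp [indepSetsIn]

end SimpleGraph

/-- Galvin: for `n ≥ 2`, every `n`-vertex graph with minimum degree at least 1 has at most
`2^(n-1) + 1 = i(K_{1,n-1})` independent sets in total. -/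
theorem stmt_0 {V : Type*} [Fintype V] (G : SimpleGraph V) (n : ℕ)
    (hn : Fintype.card V = n) (h2 : 2 ≤ n)
    (hmin : ∀ v, 1 ≤ gdeg G v) :
    indepAll G ≤ 2 ^ (n - 1) + 1 := by
  classical
  have hA : G.NoIsolatedIn univ := fun v _ => by
    obtain ⟨w, hw⟩ := Set.nonempty_of_ncard_ne_zero (Nat.one_le_iff_ne_zero.1 (hmin v))
    exact ⟨w, mem_univ w, hw⟩
  have hne : (univ : Finset V).Nonempty := card_pos.1 (by rw [card_univ, hn]; omega)
  rw [indepAll_eq_card_indepSetsIn, ← hn, ← card_univ]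
  exact card_indepSetsIn_le univ hA hne
end

section
/- Let δ ≥ 2, n ≥ 4δ², and let G be a graph on n vertices with minimum degree at least δ. Then the total number of independent sets in G satisfies i(G) ≤ i(K_{δ,n-δ}) = 2^{n-δ} + 2^{δ} − 1. -/
open SimpleGraph

/-!
Fix a maximum independent set `M` of size `α` and let `β = |Mᶜ|`. An independent set `I` is
determined by its trace `A = I ∩ Mᶜ` and a subset of `M` avoiding the neighbourhood `N_M(A)`,
so `i(G) ≤ ∑_{A ⊆ Mᶜ independent} 2^(α - |N_M(A)|)`. Maximality of `M` forces
`|N_M(A)| ≥ |A|`, and since `M` is independent, double counting its `≥ δα` edges to `Mᶜ` shows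
that the vertices of `Mᶜ` have large `M`-degree on average.

If `β ≥ 3δ`, the first bound alone gives `i(G) ≤ 2^α (3/2)^β ≤ 2^(n-δ)`. Otherwise peel off, one
at a time, the `δ` vertices of `Mᶜ` of largest `M`-degree: the sets containing a peeled vertex
contribute little, and the rest are bounded as before. When `β = δ` every vertex of `Mᶜ` is
joined to all of `M` and the bound is exactly `2^(n-δ) + 2^δ - 1`; when `δ < β < 3δ` the
condition `n ≥ 4δ²` makes it at most `2^(n-δ)`.
-/

namespace Galvin

open Finset

lemma two_pow_mul_three_pow_le_four_pow {δ β : ℕ} (h : 3 * δ ≤ β) :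
    2 ^ δ * 3 ^ β ≤ 4 ^ β := by
  obtain ⟨c, rfl⟩ := Nat.exists_eq_add_of_le h
  calc 2 ^ δ * 3 ^ (3 * δ + c) = 54 ^ δ * 3 ^ c := by
        rw [pow_add, pow_mul, ← mul_assoc, ← mul_pow]; norm_num
    _ ≤ 64 ^ δ * 4 ^ c := by gcongr <;> norm_num
    _ = 4 ^ (3 * δ + c) := by rw [pow_add, pow_mul]; norm_num

lemma add_sub_one_mul_add_lt_mul {δ r m α : ℕ} (hδ : 2 ≤ δ) (hr : 1 ≤ r) (hr' : r < 2 * δ)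
    (hα : 4 * δ ^ 2 ≤ α + δ + r) (hm : 1 ≤ m) (hmδ : m ≤ δ) :
    (δ + m - 1) * (r + m) < m * α := by
  obtain ⟨d, rfl⟩ : ∃ d, δ = d + 2 := ⟨δ - 2, by omega⟩
  obtain ⟨e, rfl⟩ : ∃ e, m = e + 1 := ⟨m - 1, by omega⟩
  obtain ⟨s, rfl⟩ : ∃ s, r = s + 1 := ⟨r - 1, by omega⟩
  rw [show d + 2 + (e + 1) - 1 = d + e + 2 by omega]
  have hα' : 4 * d ^ 2 + 13 * d + 13 ≤ α + s := by nlinarith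
  nlinarith [Nat.mul_le_mul (show e ≤ d + 1 by omega) (show s ≤ 2 * d + 2 by omega)]

/-- The `j`-th summand bounds the sets whose first vertex in peeling order is the `j`-th peeled
vertex, whose `M`-degree is at least `⌈(k - j) α / (β - j)⌉` by averaging. -/
def peelBound (α β k : ℕ) : ℕ :=
  2 ^ (α + k - β) * 3 ^ (β - k) +
    ∑ j ∈ range k, 2 ^ (β - j - 1 + (α - (k - j) * α ⌈/⌉ (β - j)))

lemma peelBound_succ {α β k : ℕ} (hk : k < β) :
    peelBound α (β - 1) k + 2 ^ (β - 1 + (α - (k + 1) * α ⌈/⌉ β)) = peelBound α β (k + 1) := by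
  have hterm : ∀ j ∈ range k,
      2 ^ (β - 1 - j - 1 + (α - (k - j) * α ⌈/⌉ (β - 1 - j))) =
        2 ^ (β - (j + 1) - 1 + (α - (k + 1 - (j + 1)) * α ⌈/⌉ (β - (j + 1)))) := by
    intro j _
    rw [Nat.add_sub_add_right, Nat.sub_sub β 1 j, add_comm 1 j]
  rw [peelBound, peelBound, sum_range_succ', sum_congr rfl hterm,
    show α + k - (β - 1) = α + (k + 1) - β by omega, show β - 1 - k = β - (k + 1) by omega]
  simp only [Nat.sub_zero, add_assoc]

lemma peelBound_self (α δ : ℕ) : peelBound α δ δ = 2 ^ α + 2 ^ δ - 1 := by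
  have hterm : ∀ j ∈ range δ,
      2 ^ (δ - j - 1 + (α - (δ - j) * α ⌈/⌉ (δ - j))) = 2 ^ (δ - 1 - j) := by
    intro j hj
    rw [← smul_eq_mul, smul_ceilDiv (by simp at hj; omega)]
    congr 1
    omega
  have hgeom : ∑ j ∈ range δ, 2 ^ (δ - 1 - j) = 2 ^ δ - 1 := by
    rw [sum_range_reflect (2 ^ ·) δ, Nat.geomSum_eq le_rfl, Nat.div_one]
  rw [peelBound, sum_congr rfl hterm, hgeom, Nat.sub_self, pow_zero, mul_one,
    Nat.add_sub_cancel, Nat.add_sub_assoc Nat.one_le_two_pow]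

lemma peelBound_le_two_pow {α β δ : ℕ} (hδ : 2 ≤ δ) (hβ : δ < β) (hβ' : β < 3 * δ)
    (hα : 4 * δ ^ 2 ≤ α + β) : peelBound α β δ ≤ 2 ^ (α + β - δ) := by
  obtain ⟨r, rfl⟩ : ∃ r, β = δ + r := ⟨β - δ, by omega⟩
  have hα2δ : 2 * δ ≤ α := by nlinarith
  have hterm : ∀ j ∈ range δ,
      2 ^ (δ + r - j - 1 + (α - (δ - j) * α ⌈/⌉ (δ + r - j))) ≤ 2 ^ (α + r - δ - 1) := by
    intro j hj
    have hj : j < δ := mem_range.mp hj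
    have hkey := add_sub_one_mul_add_lt_mul (r := r) (m := δ - j) (α := α) hδ (by omega) (by omega)
      (by omega) (by omega) (by omega)
    have hceil : 2 * δ - j - 1 < (δ - j) * α ⌈/⌉ (δ + r - j) := by
      rw [← not_le, ceilDiv_le_iff_le_mul (by omega), not_le]
      rw [show δ + (δ - j) - 1 = 2 * δ - j - 1 by omega,
        show r + (δ - j) = δ + r - j by omega] at hkey
      linarith
    exact Nat.pow_le_pow_right (by norm_num) (by omega)
  have hδpow : δ ≤ 2 ^ (δ - 1) := by
    have := Nat.lt_two_pow_self (n := δ - 1)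
    omega
  have hsum : ∑ j ∈ range δ, 2 ^ (δ + r - j - 1 + (α - (δ - j) * α ⌈/⌉ (δ + r - j)))
      ≤ 2 ^ (α + r - 2) :=
    calc _ ≤ ∑ _j ∈ range δ, 2 ^ (α + r - δ - 1) := sum_le_sum hterm
      _ = δ * 2 ^ (α + r - δ - 1) := by rw [sum_const, card_range, smul_eq_mul]
      _ ≤ 2 ^ (δ - 1) * 2 ^ (α + r - δ - 1) := Nat.mul_le_mul_right _ hδpow
      _ = 2 ^ (α + r - 2) := by rw [← pow_add]; congr 1; omega
  have hfirst : 2 ^ (α + δ - (δ + r)) * 3 ^ (δ + r - δ) ≤ 3 * 2 ^ (α + r - 2) := by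
    obtain ⟨s, rfl⟩ : ∃ s, r = s + 1 := ⟨r - 1, by omega⟩
    calc 2 ^ (α + δ - (δ + (s + 1))) * 3 ^ (δ + (s + 1) - δ)
        = 3 * (2 ^ (α - s - 1) * 3 ^ s) := by
          rw [show α + δ - (δ + (s + 1)) = α - s - 1 by omega,
            show δ + (s + 1) - δ = s + 1 by omega, pow_succ]; ring
      _ ≤ 3 * (2 ^ (α - s - 1) * 4 ^ s) := by gcongr; norm_num
      _ = 3 * 2 ^ (α + (s + 1) - 2) := by
          rw [show (4 : ℕ) = 2 ^ 2 by norm_num, ← pow_mul, ← pow_add]; congr 2; omega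
  calc peelBound α (δ + r) δ ≤ 3 * 2 ^ (α + r - 2) + 2 ^ (α + r - 2) := add_le_add hfirst hsum
    _ = 2 ^ (α + (δ + r) - δ) := by
      rw [← add_one_mul, show 3 + 1 = 2 ^ 2 by norm_num, ← pow_add]; congr 1; omega

variable {V : Type*} {G : SimpleGraph V}

lemma isIndepSet_coe_iff {s : Finset V} :
    G.IsIndepSet (s : Set V) ↔ ∀ u ∈ s, ∀ v ∈ s, ¬ G.Adj u v :=
  ⟨fun h _ hu _ hv hadj => h hu hv hadj.ne hadj, fun h _ hu _ hv _ => h _ hu _ hv⟩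

variable [DecidableRel G.Adj] {M A P : Finset V}

variable (G) in
def neighborsIn (M A : Finset V) : Finset V := {m ∈ M | ∃ a ∈ A, G.Adj m a}

lemma neighborsIn_subset : neighborsIn G M A ⊆ M := filter_subset _ _

lemma neighborsIn_mono {A' : Finset V} (h : A ⊆ A') : neighborsIn G M A ⊆ neighborsIn G M A' := by
  intro m
  simp only [neighborsIn, mem_filter]
  exact fun ⟨hm, a, ha, hadj⟩ => ⟨hm, a, h ha, hadj⟩

lemma neighborsIn_singleton (b : V) : neighborsIn G M {b} = M.bipartiteBelow G.Adj b := by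
  simp [neighborsIn, bipartiteBelow]

variable [DecidableEq V]

variable (G) in
/-- An upper bound for the number of independent sets `I` with `I ∩ Mᶜ = A`. -/
def extensionBound (M A : Finset V) : ℕ :=
  if G.IsIndepSet (A : Set V) then 2 ^ (#M - #(neighborsIn G M A)) else 0

lemma extensionBound_le_of_mem {b : V} (hb : b ∈ A) :
    extensionBound G M A ≤ 2 ^ (#M - #(neighborsIn G M {b})) := by
  unfold extensionBound
  split_ifs
  · exact Nat.pow_le_pow_right two_pos (Nat.sub_le_sub_left
      (card_le_card (neighborsIn_mono (singleton_subset_iff.mpr hb))) _)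
  · exact Nat.zero_le _

lemma sum_extensionBound_le_erase {b : V} (hb : b ∈ P) :
    ∑ A ∈ P.powerset, extensionBound G M A ≤ ∑ A ∈ (P.erase b).powerset, extensionBound G M A +
      2 ^ (#P - 1 + (#M - #(neighborsIn G M {b}))) :=
  calc ∑ A ∈ P.powerset, extensionBound G M A
      = ∑ A ∈ (P.erase b).powerset, extensionBound G M A +
          ∑ A ∈ (P.erase b).powerset, extensionBound G M (insert b A) := by
        rw [← sum_powerset_insert (notMem_erase b P), insert_erase hb]
    _ ≤ ∑ A ∈ (P.erase b).powerset, extensionBound G M A +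
          ∑ _A ∈ (P.erase b).powerset, 2 ^ (#M - #(neighborsIn G M {b})) := by
        gcongr with A
        exact extensionBound_le_of_mem (mem_insert_self b A)
    _ = _ := by rw [sum_const, card_powerset, card_erase_of_mem hb, smul_eq_mul, pow_add]

variable [Fintype V]

lemma indepAll_eq_card : indepAll G = #{s : Finset V | G.IsIndepSet (s : Set V)} := by
  rw [indepAll, Nat.card_eq_fintype_card, ← Fintype.card_subtype]
  exact Fintype.card_congr (Equiv.subtypeEquivRight fun _ => isIndepSet_coe_iff.symm)

lemma card_isIndepSet_inter_compl_eq_le (M A : Finset V) :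
    #{I : Finset V | G.IsIndepSet (I : Set V) ∧ I ∩ Mᶜ = A} ≤ extensionBound G M A := by
  unfold extensionBound
  split_ifs with hA
  · calc _ ≤ #(M \ neighborsIn G M A).powerset := by
          refine card_le_card_of_injOn (· ∩ M) ?_ ?_
          · intro I hI
            simp only [coe_filter, mem_univ, true_and, Set.mem_ofPred] at hI
            obtain ⟨hI, rfl⟩ := hI
            simp only [coe_powerset, Set.mem_preimage, Set.mem_powerset_iff, coe_subset]
            intro m hm
            simp only [mem_inter, mem_sdiff, neighborsIn, mem_filter, mem_compl, not_and,
              not_exists] at hm ⊢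
            exact ⟨hm.2, fun _ a ha hadj => hI hm.1 ha.1 (fun h => ha.2 (h ▸ hm.2)) hadj⟩
          · intro I hI J hJ hIJ
            simp only [coe_filter, mem_univ, true_and, Set.mem_ofPred] at hI hJ
            rw [← sup_inf_inf_compl (x := I) (y := M), ← sup_inf_inf_compl (x := J) (y := M)]
            simp only [inf_eq_inter, sup_eq_union, hI.2, hJ.2]
            exact congrArg (· ∪ A) hIJ
      _ = 2 ^ (#M - #(neighborsIn G M A)) := by
          rw [card_powerset, card_sdiff_of_subset neighborsIn_subset]
  · refine le_of_eq (card_eq_zero.mpr (filter_eq_empty_iff.mpr ?_))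
    rintro I - ⟨hI, rfl⟩
    exact hA (hI.mono (by simp))

lemma indepAll_le_sum_extensionBound (M : Finset V) :
    indepAll G ≤ ∑ A ∈ Mᶜ.powerset, extensionBound G M A := by
  rw [indepAll_eq_card, card_eq_sum_card_fiberwise (f := (· ∩ Mᶜ)) (t := Mᶜ.powerset)
    fun I _ => mem_powerset.mpr inter_subset_right]
  refine sum_le_sum fun A _ => ?_
  rw [filter_filter]
  exact card_isIndepSet_inter_compl_eq_le M A

/-- Exchange argument: otherwise `(M \ N(A)) ∪ A` would be a larger independent set. -/
lemma card_le_card_neighborsIn (hM : G.IsMaximumIndepSet M) (hA : G.IsIndepSet (A : Set V))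
    (hAM : A ⊆ Mᶜ) : #A ≤ #(neighborsIn G M A) := by
  have hdisj : Disjoint (M \ neighborsIn G M A) A :=
    disjoint_left.mpr fun x hx hxA => mem_compl.mp (hAM hxA) (mem_sdiff.mp hx).1
  have hind : G.IsIndepSet ((M \ neighborsIn G M A ∪ A : Finset V) : Set V) := by
    rw [isIndepSet_coe_iff] at hA ⊢
    have hMind := isIndepSet_coe_iff.mp hM.isIndepSet
    simp only [mem_union, mem_sdiff, neighborsIn, mem_filter, not_and, not_exists]
    rintro u (⟨hu, hu'⟩ | hu) v (⟨hv, hv'⟩ | hv) hadj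
    · exact hMind u hu v hv hadj
    · exact hu' hu v hv hadj
    · exact hv' hv u hu hadj.symm
    · exact hA u hu v hv hadj
  have := hM.maximum _ hind
  rw [card_union_of_disjoint hdisj, card_sdiff_of_subset neighborsIn_subset] at this
  have := card_le_card (neighborsIn_subset (G := G) (M := M) (A := A))
  omega

lemma two_pow_card_mul_extensionBound_le (hM : G.IsMaximumIndepSet M) (hAM : A ⊆ Mᶜ) :
    2 ^ #A * extensionBound G M A ≤ 2 ^ #M := by
  unfold extensionBound
  split_ifs with hA
  · have := card_le_card_neighborsIn hM hA hAM
    have := card_le_card (neighborsIn_subset (G := G) (M := M) (A := A))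
    rw [← pow_add]
    exact Nat.pow_le_pow_right two_pos (by omega)
  · simp

lemma two_pow_card_mul_sum_extensionBound_le (hM : G.IsMaximumIndepSet M) (hP : P ⊆ Mᶜ) :
    2 ^ #P * ∑ A ∈ P.powerset, extensionBound G M A ≤ 2 ^ #M * 3 ^ #P := by
  calc 2 ^ #P * ∑ A ∈ P.powerset, extensionBound G M A
      ≤ ∑ A ∈ P.powerset, 2 ^ #M * (1 ^ #A * 2 ^ (#P - #A)) := by
        rw [mul_sum]
        refine sum_le_sum fun A hA => ?_
        rw [one_pow, one_mul, ← Nat.sub_add_cancel (card_le_card (mem_powerset.mp hA)),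
          pow_add, Nat.add_sub_cancel, mul_assoc, mul_comm (2 ^ #M)]
        exact Nat.mul_le_mul_left _
          (two_pow_card_mul_extensionBound_le hM ((mem_powerset.mp hA).trans hP))
    _ = 2 ^ #M * 3 ^ #P := by rw [← mul_sum, sum_pow_mul_eq_add_pow]

theorem sum_extensionBound_le_peelBound (hM : G.IsMaximumIndepSet M) (k : ℕ) (hP : P ⊆ Mᶜ)
    (hkP : k ≤ #P) (hPM : #P ≤ #M) (hsum : k * #M ≤ ∑ b ∈ P, #(neighborsIn G M {b})) :
    ∑ A ∈ P.powerset, extensionBound G M A ≤ peelBound #M #P k := by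
  induction k generalizing P with
  | zero =>
    have h := two_pow_card_mul_sum_extensionBound_le hM hP
    rw [← Nat.sub_add_cancel hPM, pow_add, mul_comm (2 ^ _) (2 ^ #P), mul_assoc] at h
    simpa [peelBound] using Nat.le_of_mul_le_mul_left h (by positivity)
  | succ k ih =>
    obtain ⟨b, hb, hbmax⟩ :=
      exists_max_image P (fun b => #(neighborsIn G M {b})) (card_pos.mp (by omega))
    have hbM := card_le_card (neighborsIn_subset (G := G) (M := M) (A := {b}))
    have hb_deg : (k + 1) * #M ⌈/⌉ #P ≤ #(neighborsIn G M {b}) := by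
      rw [ceilDiv_le_iff_le_mul (by omega)]
      exact hsum.trans (by simpa using sum_le_card_nsmul P _ _ hbmax)
    have hrest : k * #M ≤ ∑ b' ∈ P.erase b, #(neighborsIn G M {b'}) := by
      have := sum_erase_add P (fun b => #(neighborsIn G M {b})) hb
      rw [add_one_mul] at hsum
      omega
    have hP' : #(P.erase b) = #P - 1 := card_erase_of_mem hb
    calc ∑ A ∈ P.powerset, extensionBound G M A
        ≤ ∑ A ∈ (P.erase b).powerset, extensionBound G M A +
            2 ^ (#P - 1 + (#M - #(neighborsIn G M {b}))) := sum_extensionBound_le_erase hb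
      _ ≤ peelBound #M (#P - 1) k + 2 ^ (#P - 1 + (#M - (k + 1) * #M ⌈/⌉ #P)) := by
          gcongr
          · exact hP' ▸ ih ((erase_subset b P).trans hP) (by omega) (by omega) hrest
          · exact one_le_two
      _ = peelBound #M #P (k + 1) := peelBound_succ (by omega)

theorem sum_extensionBound_le_of_three_mul_le {δ : ℕ} (hM : G.IsMaximumIndepSet M)
    (hP : P ⊆ Mᶜ) (h : 3 * δ ≤ #P) :
    ∑ A ∈ P.powerset, extensionBound G M A ≤ 2 ^ (#M + #P - δ) := by
  refine Nat.le_of_mul_le_mul_left ?_ (Nat.two_pow_pos (δ + #P))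
  calc 2 ^ (δ + #P) * ∑ A ∈ P.powerset, extensionBound G M A
      ≤ 2 ^ δ * (2 ^ #M * 3 ^ #P) := by
        rw [pow_add, mul_assoc]
        exact Nat.mul_le_mul_left _ (two_pow_card_mul_sum_extensionBound_le hM hP)
    _ = 2 ^ #M * (2 ^ δ * 3 ^ #P) := by ring
    _ ≤ 2 ^ #M * 4 ^ #P := Nat.mul_le_mul_left _ (two_pow_mul_three_pow_le_four_pow h)
    _ = 2 ^ (δ + #P) * 2 ^ (#M + #P - δ) := by
        rw [show (4 : ℕ) = 2 ^ 2 by norm_num, ← pow_mul, ← pow_add, ← pow_add]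
        congr 1
        omega

lemma le_card_bipartiteAbove_compl {δ : ℕ} (hM : G.IsIndepSet (M : Set V))
    (hmin : ∀ v, δ ≤ gdeg G v) {m : V} (hm : m ∈ M) : δ ≤ #(Mᶜ.bipartiteAbove G.Adj m) := by
  have hnbr : G.neighborSet m = ↑(Mᶜ.bipartiteAbove G.Adj m) := by
    ext v
    simp only [mem_neighborSet, bipartiteAbove, coe_filter, mem_compl, Set.mem_ofPred]
    exact ⟨fun hadj => ⟨fun hv => hM hm hv hadj.ne hadj, hadj⟩, And.right⟩
  have := hmin m
  rwa [gdeg, hnbr, Set.ncard_coe_finset] at this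

lemma mul_card_le_sum_card_neighborsIn {δ : ℕ} (hM : G.IsIndepSet (M : Set V))
    (hmin : ∀ v, δ ≤ gdeg G v) : δ * #M ≤ ∑ b ∈ Mᶜ, #(neighborsIn G M {b}) := by
  simp_rw [neighborsIn_singleton, ← sum_card_bipartiteAbove_eq_sum_card_bipartiteBelow]
  calc δ * #M = ∑ _m ∈ M, δ := by rw [sum_const, smul_eq_mul, mul_comm]
    _ ≤ _ := sum_le_sum fun m hm => le_card_bipartiteAbove_compl hM hmin hm

lemma le_card_compl [Nonempty V] {δ : ℕ} (hM : G.IsMaximumIndepSet M)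
    (hmin : ∀ v, δ ≤ gdeg G v) : δ ≤ #Mᶜ := by
  obtain ⟨v⟩ := ‹Nonempty V›
  obtain ⟨m, hm⟩ : M.Nonempty :=
    card_pos.mp (hM.maximum {v} (by simp [Set.pairwise_singleton]))
  exact (le_card_bipartiteAbove_compl hM.isIndepSet hmin hm).trans
    (card_le_card (filter_subset _ _))

end Galvin

/-- Galvin: for `δ ≥ 2` and `n ≥ 4δ²`, every `n`-vertex graph with minimum degree at least
`δ` has at most `2^(n-δ) + 2^δ - 1 = i(K_{δ,n-δ})` independent sets in total. -/
theorem stmt_1 {V : Type*} [Fintype V] (G : SimpleGraph V) (δ n : ℕ)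
    (hδ : 2 ≤ δ) (hn : Fintype.card V = n) (hbig : 4 * δ ^ 2 ≤ n)
    (hmin : ∀ v, δ ≤ gdeg G v) :
    indepAll G ≤ 2 ^ (n - δ) + 2 ^ δ - 1 := by
  classical
  obtain ⟨M, hM⟩ := G.maximumIndepSet_exists
  have : Nonempty V := Fintype.card_pos_iff.mp (by nlinarith)
  have hδM := Galvin.le_card_compl hM hmin
  have hslack : 2 ^ (n - δ) ≤ 2 ^ (n - δ) + 2 ^ δ - 1 :=
    Nat.le_sub_one_of_lt (Nat.lt_add_of_pos_right (Nat.two_pow_pos δ))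
  obtain rfl : M.card + Mᶜ.card = n := hn ▸ Finset.card_add_card_compl M
  refine (Galvin.indepAll_le_sum_extensionBound M).trans ?_
  rcases le_or_gt (3 * δ) Mᶜ.card with hlarge | hsmall
  · exact (Galvin.sum_extensionBound_le_of_three_mul_le hM subset_rfl hlarge).trans hslack
  have hpeel := Galvin.sum_extensionBound_le_peelBound hM δ (subset_refl Mᶜ) hδM (by nlinarith)
    (Galvin.mul_card_le_sum_card_neighborsIn hM.isIndepSet hmin)
  rcases hδM.eq_or_lt with heq | hlt
  · subst heq
    rwa [Nat.add_sub_cancel, ← Galvin.peelBound_self]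
  · exact (hpeel.trans (Galvin.peelBound_le_two_pow hδ hlt hsmall hbig)).trans hslack
end

section
/- Let δ ≥ 1, n ≥ 2δ, t ≥ 3, and let G be a bipartite graph on n vertices with minimum degree at least δ. Then i_t(G) ≤ i_t(K_{δ,n-δ}) = C(n-δ, t) + C(δ, t). -/
open SimpleGraph

open Finset

/-!
Split the vertices into colour classes `X ∪ Y` with `#X ≤ #Y`, put `D = #X - δ`, and sort the
independent `t`-sets `s` by `j = #(s ∩ X)`. For `j < t` pick `y ∈ s ∩ Y`: then `s ∩ X` avoids
the at least `δ` neighbours of `y`, so there are at most `C(D, j) * C(#Y, t - j)` such sets, the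
`j`-th term of Vandermonde's expansion of `C(D + #Y, t)`. For `j = t` the bound
`C(#X, t) = C(δ, t) + S + C(D, t)`, with `S = Σ_{0<i<t} C(D, i) * C(δ, t - i)`, exceeds the last
term by `C(δ, t) + S`. The `C(δ, t)` is on the right-hand side, and `S` is absorbed by the
`j = 1` term: there are at most `Σ_{x ∈ X} C(#Y - deg x, t - 1)` such sets, and since double
counting edges gives `Σ_{x ∈ X} (#Y - deg x) ≤ D * #Y`, binomial estimates keep this count plus
`S` below the Vandermonde term `D * C(#Y, t - 1)`.
-/

namespace Nat

theorem succ_mul_choose_succ (p i : ℕ) : (i + 1) * p.choose (i + 1) = p * (p - 1).choose i := by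
  rcases p with _ | p
  · simp
  · rw [Nat.add_sub_cancel, add_one_mul_choose_eq, mul_comm]

theorem succ_mul_choose_succ_le {m L : ℕ} (h : m ≤ L + 1) (k : ℕ) :
    (k + 1) * m.choose (k + 1) ≤ m * L.choose k := by
  rw [succ_mul_choose_succ]
  exact Nat.mul_le_mul_left m (choose_le_choose k (by omega))

theorem mul_choose_succ_le_mul_choose_succ {m M : ℕ} (h : m ≤ M) (k : ℕ) :
    M * m.choose (k + 1) ≤ m * M.choose (k + 1) := by
  refine Nat.le_of_mul_le_mul_left ?_ k.succ_pos
  calc (k + 1) * (M * m.choose (k + 1)) = M * m * (m - 1).choose k := by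
        rw [mul_left_comm, succ_mul_choose_succ, mul_assoc]
    _ ≤ M * m * (M - 1).choose k := Nat.mul_le_mul_left _ (choose_le_choose k (by omega))
    _ = (k + 1) * (m * M.choose (k + 1)) := by
        rw [mul_left_comm, succ_mul_choose_succ, mul_comm M m, mul_assoc]

theorem mul_choose_add_mul_choose_le {d b k : ℕ} (hd : 1 ≤ d) (hdb : d ≤ b) (hk : 1 ≤ k) :
    b * (b - d - 1).choose k + d * (b - 2).choose k ≤ b * (b - 1).choose k := by
  obtain ⟨k, rfl⟩ : ∃ k', k = k' + 1 := ⟨k - 1, by omega⟩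
  obtain rfl | hlt := hdb.eq_or_lt
  · rw [show d - d - 1 = 0 by omega, choose_zero_succ, mul_zero, zero_add]
    exact Nat.mul_le_mul_left d (choose_le_choose _ (by omega))
  obtain ⟨m, rfl⟩ : ∃ m, b = m + d + 1 := ⟨b - d - 1, by omega⟩
  rw [show m + d + 1 - d - 1 = m by omega, show m + d + 1 - 2 = m + d - 1 by omega,
    show m + d + 1 - 1 = m + d by omega]
  have hchord := Nat.mul_le_mul_left (m + d + 1)
    (mul_choose_succ_le_mul_choose_succ (show m ≤ m + d by omega) k)
  have hmono := Nat.mul_le_mul_left ((m + d + 1) * d)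
    (choose_le_choose (k + 1) (show m + d - 1 ≤ m + d by omega))
  refine Nat.le_of_mul_le_mul_left ?_ (show 0 < m + d by omega)
  nlinarith

theorem add_choose_eq_sum_range (p q t : ℕ) :
    (p + q).choose t = ∑ j ∈ range (t + 1), p.choose j * q.choose (t - j) := by
  rw [add_choose_eq, Finset.Nat.sum_antidiagonal_eq_sum_range_succ_mk]

theorem add_succ_mul_choose_mul_choose_le (p q i l : ℕ) :
    (i + l + 1) * (p.choose (i + 1) * q.choose (l + 1))
      ≤ p * q * ((p - 1).choose i * (q - 1).choose l) := by
  calc (i + l + 1) * (p.choose (i + 1) * q.choose (l + 1))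
      ≤ (i + 1) * (l + 1) * (p.choose (i + 1) * q.choose (l + 1)) := by
        gcongr; nlinarith
    _ = ((i + 1) * p.choose (i + 1)) * ((l + 1) * q.choose (l + 1)) := by ring
    _ = p * q * ((p - 1).choose i * (q - 1).choose l) := by
        rw [succ_mul_choose_succ, succ_mul_choose_succ]; ring

theorem succ_mul_sum_choose_mul_choose_le (p q k : ℕ) :
    (k + 1) * ∑ i ∈ range (k + 1), p.choose (i + 1) * q.choose (k + 1 - i)
      ≤ p * q * (p + q - 2).choose k := by
  calc (k + 1) * ∑ i ∈ range (k + 1), p.choose (i + 1) * q.choose (k + 1 - i)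
      ≤ ∑ i ∈ range (k + 1), p * q * ((p - 1).choose i * (q - 1).choose (k - i)) := by
        rw [mul_sum]
        refine sum_le_sum fun i hi => ?_
        have hik : i + (k - i) = k := Nat.add_sub_of_le (Nat.lt_succ_iff.mp (mem_range.mp hi))
        have := add_succ_mul_choose_mul_choose_le p q i (k - i)
        rwa [hik, show k - i + 1 = k + 1 - i by omega] at this
    _ = p * q * (p - 1 + (q - 1)).choose k := by rw [← mul_sum, add_choose_eq_sum_range]
    _ ≤ p * q * (p + q - 2).choose k := by
        rcases p with _ | p
        · simp
        rcases q with _ | q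
        · simp
        exact le_of_eq (by congr 2; omega)

theorem add_sum_choose_mul_choose_le {δ D b k M₁ : ℕ} (hδ : 1 ≤ δ) (hb : δ + D ≤ b)
    (hk : 1 ≤ k) (hM₁ : (k + 1) * M₁ ≤ D * b * (b - δ - 1).choose k) :
    M₁ + ∑ i ∈ range (k + 1), D.choose (i + 1) * δ.choose (k + 1 - i)
      ≤ D * b.choose (k + 1) := by
  refine Nat.le_of_mul_le_mul_left ?_ k.succ_pos
  have hS := succ_mul_sum_choose_mul_choose_le D δ k
  have hmono : (D + δ - 2).choose k ≤ (b - 2).choose k := choose_le_choose k (by omega)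
  calc (k + 1) * (M₁ + ∑ i ∈ range (k + 1), D.choose (i + 1) * δ.choose (k + 1 - i))
      ≤ D * b * (b - δ - 1).choose k + D * δ * (D + δ - 2).choose k := by
        rw [mul_add]; exact Nat.add_le_add hM₁ hS
    _ ≤ D * (b * (b - δ - 1).choose k + δ * (b - 2).choose k) := by
        rw [mul_add, ← mul_assoc, ← mul_assoc]; gcongr
    _ ≤ D * (b * (b - 1).choose k) :=
        Nat.mul_le_mul_left D (mul_choose_add_mul_choose_le hδ (by omega) hk)
    _ = (k + 1) * (D * b.choose (k + 1)) := by
        rw [← succ_mul_choose_succ]; ring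

theorem sum_le_choose_add_choose {δ a b t : ℕ} (M : ℕ → ℕ) (hδ : 1 ≤ δ) (hδa : δ ≤ a)
    (hab : a ≤ b) (ht : 3 ≤ t) (hM : ∀ j < t, M j ≤ (a - δ).choose j * b.choose (t - j))
    (hMt : M t ≤ a.choose t) (hM₁ : (t - 1) * M 1 ≤ (a - δ) * b * (b - δ - 1).choose (t - 2)) :
    ∑ j ∈ range (t + 1), M j ≤ (a + b - δ).choose t + δ.choose t := by
  obtain ⟨D, rfl⟩ : ∃ D, a = δ + D := ⟨a - δ, by omega⟩
  obtain ⟨k, rfl⟩ : ∃ k, t = k + 2 := ⟨t - 2, by omega⟩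
  rw [Nat.add_sub_cancel_left] at hM hM₁
  rw [show δ + D + b - δ = D + b by omega]
  have hM₁S := add_sum_choose_mul_choose_le hδ (by omega) (by omega) hM₁
  have hDb := add_choose_eq_sum_range D b (k + 2)
  have hδD := add_choose_eq_sum_range D δ (k + 2)
  rw [add_comm D δ] at hδD
  rw [sum_range_succ, sum_range_succ', sum_range_succ'] at hDb ⊢
  rw [sum_range_succ, sum_range_succ'] at hδD
  have hsub : ∀ i, k + 2 - (i + 1) = k + 1 - i := fun i => by omega
  simp only [zero_add, choose_zero_right, choose_one_right, Nat.sub_self, Nat.sub_zero, one_mul,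
    mul_one, hsub, Nat.add_sub_add_right] at hDb hδD ⊢
  have hmid : ∑ i ∈ range k, M (i + 1 + 1)
      ≤ ∑ i ∈ range k, D.choose (i + 1 + 1) * b.choose (k - i) :=
    sum_le_sum fun i hi => by simpa using hM (i + 2) (by simp at hi; omega)
  have hM₀ : M 0 ≤ b.choose (k + 2) := by simpa using hM 0 (by omega)
  omega

end Nat

section

variable {α : Type*} [Fintype α] [DecidableEq α] {X Y : Finset α}

theorem Finset.eq_of_inter_eq_of_inter_eq (huniv : X ∪ Y = univ) {s s' : Finset α}
    (hX : s ∩ X = s' ∩ X) (hY : s ∩ Y = s' ∩ Y) : s = s' := by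
  rw [← inter_univ s, ← inter_univ s', ← huniv, inter_union_distrib_left,
    inter_union_distrib_left, hX, hY]

theorem Finset.card_inter_add_card_inter (hXY : Disjoint X Y) (huniv : X ∪ Y = univ)
    (s : Finset α) : #(s ∩ X) + #(s ∩ Y) = #s := by
  rw [← card_union_of_disjoint (hXY.mono inter_subset_right inter_subset_right),
    ← inter_union_distrib_left, huniv, inter_univ]

end

namespace SimpleGraph

variable {V : Type*} [Fintype V] {G : SimpleGraph V} {X Y : Finset V} {δ t : ℕ}

theorem IsBipartiteWith.sum_card_sub_degree_le [DecidableRel G.Adj]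
    (hG : G.IsBipartiteWith ↑X ↑Y) (hdeg : ∀ v, δ ≤ G.degree v) :
    ∑ x ∈ X, (#Y - G.degree x) ≤ (#X - δ) * #Y := by
  have hsum : ∑ x ∈ X, (#Y - G.degree x) + ∑ x ∈ X, G.degree x = #X * #Y := by
    rw [← sum_add_distrib, sum_congr rfl fun x hx =>
      Nat.sub_add_cancel (isBipartiteWith_degree_le hG (mem_coe.mpr hx)), sum_const, smul_eq_mul]
  have hedges : #Y * δ ≤ ∑ x ∈ X, G.degree x := by
    rw [isBipartiteWith_sum_degrees_eq hG]
    exact card_nsmul_le_sum _ _ _ fun y _ => hdeg y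
  rw [Nat.sub_mul, mul_comm δ]
  omega

variable [DecidableEq V]

theorem IsBipartite.exists_isBipartiteWith_union_eq_univ (h : G.IsBipartite) :
    ∃ X Y : Finset V, G.IsBipartiteWith ↑X ↑Y ∧ X ∪ Y = univ := by
  obtain ⟨c⟩ := h
  refine ⟨univ.filter (c · = 0), univ.filter (c · ≠ 0), ⟨?_, fun v w hvw => ?_⟩,
    filter_union_filter_not_eq _ _⟩
  · rw [disjoint_coe]; exact disjoint_filter_filter_not _ _ _
  · have := c.valid hvw
    simp only [coe_filter, mem_univ, true_and, Set.mem_ofPred_eq]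
    omega

variable [DecidableRel G.Adj]

theorem card_filter_inter_eq_le_choose (huniv : X ∪ Y = univ) {F : Finset (Finset V)} {j : ℕ}
    (hF : ∀ s ∈ F, G.IsIndepSet ↑s ∧ #(s ∩ X) = j) {B : Finset V} {y : V} (hy : y ∈ B) :
    #{s ∈ F | s ∩ Y = B} ≤ (#(X \ G.neighborFinset y)).choose j := by
  rw [← card_powersetCard]
  refine card_le_card_of_injOn (· ∩ X) (fun s hs => ?_) fun s hs s' hs' hss' => ?_
  · obtain ⟨hsF, hsB⟩ := mem_filter.mp hs
    refine mem_powersetCard.mpr ⟨fun x hx => ?_, (hF s hsF).2⟩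
    obtain ⟨hxs, hxX⟩ := mem_inter.mp hx
    have hys : y ∈ s := (mem_inter.mp (hsB ▸ hy)).1
    refine mem_sdiff.mpr ⟨hxX, fun hyx => ?_⟩
    rw [mem_neighborFinset] at hyx
    exact (hF s hsF).1 hys hxs hyx.ne hyx
  · exact eq_of_inter_eq_of_inter_eq huniv hss'
      ((mem_filter.mp hs).2.trans (mem_filter.mp hs').2.symm)

theorem IsBipartiteWith.card_sdiff_neighborFinset (hG : G.IsBipartiteWith ↑X ↑Y) {y : V}
    (hy : y ∈ Y) : #(X \ G.neighborFinset y) = #X - G.degree y := by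
  rw [card_sdiff_of_subset (isBipartiteWith_neighborFinset_subset' hG hy),
    card_neighborFinset_eq_degree]

theorem IsBipartiteWith.card_filter_card_inter_eq_le (hG : G.IsBipartiteWith ↑X ↑Y)
    (huniv : X ∪ Y = univ) (hdeg : ∀ v, δ ≤ G.degree v) {j : ℕ} (hj : j < t) :
    #{s ∈ G.indepSetFinset t | #(s ∩ X) = j} ≤ (#X - δ).choose j * (#Y).choose (t - j) := by
  rw [← card_powersetCard (t - j) Y]
  refine card_le_mul_card_image_of_maps_to (f := (· ∩ Y)) (fun s hs => ?_) _ fun B hB => ?_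
  · obtain ⟨hsI, hsj⟩ := mem_filter.mp hs
    have hsplit := card_inter_add_card_inter (disjoint_coe.mp hG.disjoint) huniv s
    rw [(mem_indepSetFinset_iff.mp hsI).card_eq] at hsplit
    exact mem_powersetCard.mpr ⟨inter_subset_right, by omega⟩
  · obtain ⟨hBY, hBcard⟩ := mem_powersetCard.mp hB
    obtain ⟨y, hy⟩ := card_pos.mp (show 0 < #B by omega)
    refine (card_filter_inter_eq_le_choose (G := G) huniv (fun s hs => ?_) hy).trans
      (Nat.choose_le_choose j ?_)
    · obtain ⟨hsI, hsj⟩ := mem_filter.mp hs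
      exact ⟨(mem_indepSetFinset_iff.mp hsI).isIndepSet, hsj⟩
    · rw [hG.card_sdiff_neighborFinset (hBY hy)]
      exact Nat.sub_le_sub_left (hdeg y) _

theorem card_filter_card_inter_eq_self_le :
    #{s ∈ G.indepSetFinset t | #(s ∩ X) = t} ≤ (#X).choose t := by
  rw [← card_powersetCard]
  refine card_le_card fun s hs => ?_
  obtain ⟨hsI, hst⟩ := mem_filter.mp hs
  have hcard := (mem_indepSetFinset_iff.mp hsI).card_eq
  have hsX : s ∩ X = s := eq_of_subset_of_card_le inter_subset_left (by omega)
  exact mem_powersetCard.mpr ⟨inter_eq_left.mp hsX, hcard⟩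

theorem IsBipartiteWith.card_filter_card_inter_eq_one_le (hG : G.IsBipartiteWith ↑X ↑Y)
    (huniv : X ∪ Y = univ) :
    #{s ∈ G.indepSetFinset t | #(s ∩ X) = 1} ≤ ∑ x ∈ X, (#Y - G.degree x).choose (t - 1) := by
  rw [card_eq_sum_card_fiberwise (f := (· ∩ X)) (t := X.powersetCard 1)
    fun s hs => mem_powersetCard.mpr ⟨inter_subset_right, (mem_filter.mp hs).2⟩,
    powersetCard_one, sum_map]
  refine sum_le_sum fun x hx => ?_
  rw [← hG.symm.card_sdiff_neighborFinset hx]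
  refine card_filter_inter_eq_le_choose (by rwa [union_comm]) (fun s hs => ?_)
    (mem_singleton_self x)
  have hsI : s ∈ G.indepSetFinset t := (mem_filter.mp hs).1
  have hs1 : #(s ∩ X) = 1 := (mem_filter.mp hs).2
  have hsplit := card_inter_add_card_inter (disjoint_coe.mp hG.disjoint) huniv s
  rw [(mem_indepSetFinset_iff.mp hsI).card_eq] at hsplit
  exact ⟨(mem_indepSetFinset_iff.mp hsI).isIndepSet, by omega⟩

theorem IsBipartiteWith.mul_card_filter_card_inter_eq_one_le (hG : G.IsBipartiteWith ↑X ↑Y)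
    (huniv : X ∪ Y = univ) (hdeg : ∀ v, δ ≤ G.degree v) (ht : 2 ≤ t) :
    (t - 1) * #{s ∈ G.indepSetFinset t | #(s ∩ X) = 1}
      ≤ (#X - δ) * #Y * (#Y - δ - 1).choose (t - 2) := by
  obtain ⟨k, rfl⟩ : ∃ k, t = k + 2 := ⟨t - 2, by omega⟩
  rw [show k + 2 - 1 = k + 1 by omega, Nat.add_sub_cancel]
  calc (k + 1) * #{s ∈ G.indepSetFinset (k + 2) | #(s ∩ X) = 1}
      ≤ ∑ x ∈ X, (k + 1) * (#Y - G.degree x).choose (k + 1) := by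
        rw [← mul_sum]
        exact Nat.mul_le_mul_left _ (hG.card_filter_card_inter_eq_one_le huniv)
    _ ≤ ∑ x ∈ X, (#Y - G.degree x) * (#Y - δ - 1).choose k :=
        sum_le_sum fun x _ => Nat.succ_mul_choose_succ_le (by have := hdeg x; omega) k
    _ ≤ (#X - δ) * #Y * (#Y - δ - 1).choose k := by
        rw [← sum_mul]
        exact Nat.mul_le_mul_right _ (hG.sum_card_sub_degree_le hdeg)

theorem IsBipartiteWith.le_card_of_le_degree (hG : G.IsBipartiteWith ↑X ↑Y) (huniv : X ∪ Y = univ)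
    (hδ : 1 ≤ δ) (hdeg : ∀ v, δ ≤ G.degree v) (v : V) : δ ≤ #X := by
  suffices hY : Y.Nonempty by
    obtain ⟨y, hy⟩ := hY
    exact (hdeg y).trans (isBipartiteWith_degree_le' hG (mem_coe.mpr hy))
  rcases mem_union.mp (huniv ▸ mem_univ v) with hv | hv
  · obtain ⟨w, hvw⟩ := (G.degree_pos_iff_exists_adj v).mp (by have := hdeg v; omega)
    exact ⟨w, hG.mem_of_mem_adj (mem_coe.mpr hv) hvw⟩
  · exact ⟨v, hv⟩

theorem IsBipartiteWith.card_indepSetFinset_le (hG : G.IsBipartiteWith ↑X ↑Y)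
    (huniv : X ∪ Y = univ) (hδ : 1 ≤ δ) (hδX : δ ≤ #X) (hXY : #X ≤ #Y) (ht : 3 ≤ t)
    (hdeg : ∀ v, δ ≤ G.degree v) :
    #(G.indepSetFinset t) ≤ (#X + #Y - δ).choose t + δ.choose t := by
  rw [card_eq_sum_card_fiberwise (f := fun s => #(s ∩ X)) (t := range (t + 1)) fun s hs => ?_]
  · exact Nat.sum_le_choose_add_choose _ hδ hδX hXY ht
      (fun j hj => hG.card_filter_card_inter_eq_le huniv hdeg hj)
      card_filter_card_inter_eq_self_le
      (hG.mul_card_filter_card_inter_eq_one_le huniv hdeg (by omega))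
  · have := card_le_card (inter_subset_left (s₁ := s) (s₂ := X))
    rw [(mem_indepSetFinset_iff.mp hs).card_eq] at this
    exact mem_range.mpr (show #(s ∩ X) < t + 1 by omega)

theorem IsBipartite.card_indepSetFinset_le (hG : G.IsBipartite) (hδ : 1 ≤ δ) (ht : 3 ≤ t)
    (hdeg : ∀ v, δ ≤ G.degree v) :
    #(G.indepSetFinset t) ≤ (Fintype.card V - δ).choose t + δ.choose t := by
  rcases isEmpty_or_nonempty V with hV | ⟨⟨v⟩⟩
  · calc #(G.indepSetFinset t) ≤ #(univ.powersetCard t) := card_le_card fun s hs =>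
          mem_powersetCard.mpr ⟨subset_univ s, (mem_indepSetFinset_iff.mp hs).card_eq⟩
      _ ≤ _ := by simp [Fintype.card_eq_zero]
  obtain ⟨X, Y, hXY, huniv⟩ := hG.exists_isBipartiteWith_union_eq_univ
  rw [← card_univ, ← huniv, card_union_of_disjoint (disjoint_coe.mp hXY.disjoint)]
  have huniv' : Y ∪ X = univ := by rwa [union_comm]
  rcases le_total #X #Y with hle | hle
  · exact hXY.card_indepSetFinset_le huniv hδ (hXY.le_card_of_le_degree huniv hδ hdeg v) hle
      ht hdeg
  · rw [add_comm #X]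
    exact hXY.symm.card_indepSetFinset_le huniv' hδ
      (hXY.symm.le_card_of_le_degree huniv' hδ hdeg v) hle ht hdeg

end SimpleGraph

theorem indepT_eq_card_indepSetFinset {V : Type*} [Fintype V] [DecidableEq V]
    (G : SimpleGraph V) [DecidableRel G.Adj] (t : ℕ) : indepT G t = #(G.indepSetFinset t) := by
  rw [indepT, Nat.card_eq_fintype_card, Fintype.card_subtype]
  congr 1
  ext s
  simp only [mem_filter, mem_univ, true_and, mem_indepSetFinset_iff, isNIndepSet_iff,
    isIndepSet_iff]
  rw [and_comm]
  refine and_congr_left fun _ => ⟨fun h u hu v hv _ => h u hu v hv, fun h u hu v hv => ?_⟩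
  rcases eq_or_ne u v with rfl | huv
  · exact G.irrefl
  · exact h hu hv huv

theorem gdeg_eq_degree {V : Type*} [Fintype V] (G : SimpleGraph V) [DecidableRel G.Adj] (v : V) :
    gdeg G v = G.degree v := by
  rw [gdeg, ← card_neighborFinset_eq_degree, neighborFinset_def, Set.ncard_eq_toFinset_card']

theorem stmt_2_general {V : Type*} [Fintype V] (G : SimpleGraph V) (δ n t : ℕ)
    (hδ : 1 ≤ δ) (hn : Fintype.card V = n) (ht : 3 ≤ t)
    (hbip : G.Colorable 2) (hmin : ∀ v, δ ≤ gdeg G v) :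
    indepT G t ≤ (n - δ).choose t + δ.choose t := by
  classical
  rw [indepT_eq_card_indepSetFinset, ← hn]
  exact IsBipartite.card_indepSetFinset_le hbip hδ ht fun v => gdeg_eq_degree G v ▸ hmin v

/-- Alexander–Cutler–Mink: for `δ ≥ 1`, `n ≥ 2δ`, `t ≥ 3`, every `n`-vertex bipartite graph
with minimum degree at least `δ` has at most `C(n-δ,t) + C(δ,t) = i_t(K_{δ,n-δ})`
independent sets of size `t`. -/
theorem stmt_2 {V : Type*} [Fintype V] (G : SimpleGraph V) (δ n t : ℕ)
    (hδ : 1 ≤ δ) (hn : Fintype.card V = n) (hn2 : 2 * δ ≤ n) (ht : 3 ≤ t)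
    (hbip : G.Colorable 2) (hmin : ∀ v, δ ≤ gdeg G v) :
    indepT G t ≤ (n - δ).choose t + δ.choose t :=
  stmt_2_general G δ n t hδ hn ht hbip hmin
end

section
/- Let n ≥ 6 and let G be a graph on n vertices with minimum degree at least 3. Then i_3(G) = C(n-3, 3) + 1 if and only if G is isomorphic to K_{3,n-3}. -/
open SimpleGraph

/-!
Deleting a vertex `h` splits the independent triples into those avoiding `h` and those made of
`h` and an independent pair of non-neighbours of `h`. This gives, by induction on `k`, that a graph
on `n ≥ k + 3` vertices of minimum degree at least `k` has at most `C(n-k,3) + C(k,3)` independent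
triples, the value for `K_{k,n-k}`. If some vertex has fewer than `k` non-neighbours, delete it;
otherwise every degree `d` satisfies `k ≤ d ≤ n-1-k`, and by Goodman's count there are
`½ ∑ d (n-1-d) ≥ ½ n k (n-1-k)` triples spanning one or two edges, which makes the bound strict.
Following the equality case through the induction, every vertex outside some `k`-set `S` is
adjacent to exactly the vertices of `S`. For `k = 3` the triple `S` itself must then be
independent, so `G = K_{3,n-3}`.
-/

open Finset

namespace Nat

theorem two_mul_choose_two (m : ℕ) : 2 * m.choose 2 = m * (m - 1) := by
  rw [choose_two_right]
  exact Nat.mul_div_cancel' (even_mul_pred_self m).two_dvd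

theorem two_mul_choose_add_three_lt {m K : ℕ} (hK : 0 < K) (hKm : K < m) :
    2 * (m + K).choose 3 < 2 * (m.choose 3 + K.choose 3) + (m + K) * (K * (m - 1)) := by
  have hvandermonde :
      (m + K).choose 3 = m.choose 3 + m.choose 2 * K + m * K.choose 2 + K.choose 3 := by
    rw [add_choose_eq, Nat.sum_antidiagonal_succ, Nat.sum_antidiagonal_succ,
      Nat.sum_antidiagonal_succ, Nat.antidiagonal_zero, sum_singleton]
    simp only [choose_zero_right, reduceAdd, choose_one_right]
    ring
  have hm := two_mul_choose_two m
  have hK2 := two_mul_choose_two K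
  obtain ⟨a, rfl⟩ : ∃ a, m = a + 1 := ⟨m - 1, by omega⟩
  obtain ⟨b, rfl⟩ : ∃ b, K = b + 1 := ⟨K - 1, by omega⟩
  simp only [Nat.add_sub_cancel] at hm hK2 ⊢
  nlinarith

end Nat

namespace SimpleGraph

section Counting

variable {V : Type*} (G : SimpleGraph V) [DecidableRel G.Adj]

def nbrsIn (A : Finset V) (v : V) : Finset V := {w ∈ A | G.Adj v w}

variable {G} in
theorem mem_nbrsIn {A : Finset V} {v w : V} : w ∈ G.nbrsIn A v ↔ w ∈ A ∧ G.Adj v w :=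
  mem_filter

variable [DecidableEq V]

def nonNbrsIn (A : Finset V) (v : V) : Finset V := {w ∈ A.erase v | ¬G.Adj v w}

def indepSubsets (A : Finset V) (t : ℕ) : Finset (Finset V) :=
  {s ∈ A.powersetCard t | G.IsIndepSet s}

/-- `G[A]` is the join of `G[S]` with the edgeless graph on `A \ S`. -/
def IsJoinWithEmpty (A S : Finset V) : Prop :=
  ∀ u ∈ A \ S, ∀ v ∈ A, G.Adj u v ↔ v ∈ S

def cherries (A : Finset V) : Finset (Σ _ : V, V × V) :=
  A.sigma fun v => G.nbrsIn A v ×ˢ G.nonNbrsIn A v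

variable {G}

theorem mem_nonNbrsIn {A : Finset V} {v w : V} :
    w ∈ G.nonNbrsIn A v ↔ w ∈ A ∧ w ≠ v ∧ ¬G.Adj v w := by
  simp only [nonNbrsIn, mem_filter, mem_erase]
  tauto

theorem mem_indepSubsets {A s : Finset V} {t : ℕ} :
    s ∈ G.indepSubsets A t ↔ s ⊆ A ∧ s.card = t ∧ G.IsIndepSet s := by
  simp only [indepSubsets, mem_filter, mem_powersetCard, and_assoc]

theorem card_indepSubsets_le (A : Finset V) (t : ℕ) :
    (G.indepSubsets A t).card ≤ A.card.choose t :=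
  (card_filter_le _ _).trans_eq (card_powersetCard t A)

theorem card_nbrsIn_add_card_nonNbrsIn {A : Finset V} {v : V} (hv : v ∈ A) :
    (G.nbrsIn A v).card + (G.nonNbrsIn A v).card + 1 = A.card := by
  have hnbrs : G.nbrsIn A v = {w ∈ A.erase v | G.Adj v w} := by
    ext w
    simp only [nbrsIn, mem_filter, mem_erase]
    exact ⟨fun h => ⟨⟨h.2.ne', h.1⟩, h.2⟩, fun h => ⟨h.1.2, h.2⟩⟩
  rw [hnbrs, nonNbrsIn, card_filter_add_card_filter_not, card_erase_add_one hv]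

theorem le_card_nbrsIn_erase {A : Finset V} {k : ℕ}
    (hdeg : ∀ v ∈ A, k + 1 ≤ (G.nbrsIn A v).card) (h : V) :
    ∀ v ∈ A.erase h, k ≤ (G.nbrsIn (A.erase h) v).card := by
  intro v hv
  have hsub : G.nbrsIn A v ⊆ insert h (G.nbrsIn (A.erase h) v) := by
    intro w
    simp only [nbrsIn, mem_filter, mem_insert, mem_erase]
    tauto
  have := (card_le_card hsub).trans (card_insert_le _ _)
  have := hdeg v (mem_of_mem_erase hv)
  omega

theorem card_indepSubsets_succ {A : Finset V} {h : V} (hh : h ∈ A) (t : ℕ) :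
    (G.indepSubsets A (t + 1)).card =
      (G.indepSubsets (A.erase h) (t + 1)).card + (G.indepSubsets (G.nonNbrsIn A h) t).card := by
  rw [← card_filter_add_card_filter_not (p := fun s => h ∉ s)]
  congr 1
  · congr 1
    ext s
    simp only [mem_filter, mem_indepSubsets, subset_erase]
    tauto
  refine card_nbij' (·.erase h) (insert h) ?_ ?_ ?_ ?_
  · intro s hs
    simp only [coe_filter, Set.mem_ofPred_eq, not_not, mem_indepSubsets] at hs
    obtain ⟨⟨hsA, hcard, hind⟩, hhs⟩ := hs
    refine mem_indepSubsets.2 ⟨fun w hw => ?_, by rw [card_erase_of_mem hhs, hcard]; rfl,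
      hind.mono (coe_subset.2 (erase_subset h s))⟩
    obtain ⟨hwh, hws⟩ := mem_erase.1 hw
    exact mem_nonNbrsIn.2 ⟨hsA hws, hwh, hind (mem_coe.2 hhs) (mem_coe.2 hws) hwh.symm⟩
  · intro s hs
    obtain ⟨hsM, hcard, hind⟩ := mem_indepSubsets.1 hs
    have hM : ∀ w ∈ s, w ∈ A ∧ w ≠ h ∧ ¬G.Adj h w :=
      fun w hw => mem_nonNbrsIn.1 (hsM hw)
    have hhs : h ∉ s := fun hs' => (hM h hs').2.1 rfl
    refine mem_filter.2 ⟨mem_indepSubsets.2 ⟨insert_subset hh fun w hw => (hM w hw).1,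
      by rw [card_insert_of_notMem hhs, hcard], ?_⟩, not_not.2 (mem_insert_self h s)⟩
    rw [coe_insert]
    exact Set.pairwise_insert.2
      ⟨hind, fun w hw _ => ⟨(hM w hw).2.2, fun hadj => (hM w hw).2.2 hadj.symm⟩⟩
  · intro s hs
    simp only [coe_filter, Set.mem_ofPred_eq, not_not] at hs
    exact insert_erase hs.2
  · intro s hs
    exact erase_insert fun hs' => (mem_nonNbrsIn.1 ((mem_indepSubsets.1 hs).1 hs')).2.1 rfl

theorem card_indepSubsets_three_le_erase_add {A : Finset V} {h : V} {k : ℕ} (hh : h ∈ A)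
    (hk : (G.nonNbrsIn A h).card ≤ k) :
    (G.indepSubsets A 3).card ≤ (G.indepSubsets (A.erase h) 3).card + k.choose 2 := by
  rw [card_indepSubsets_succ hh 2]
  exact Nat.add_le_add_left ((card_indepSubsets_le _ 2).trans (Nat.choose_le_choose 2 hk)) _

theorem isIndepSet_of_card_indepSubsets_eq {A : Finset V} {t : ℕ} (ht : 2 ≤ t)
    (htA : t ≤ A.card) (h : (G.indepSubsets A t).card = A.card.choose t) :
    G.IsIndepSet (A : Set V) := by
  have hall : G.indepSubsets A t = A.powersetCard t :=
    eq_of_subset_of_card_le (filter_subset _ _) (by rw [card_powersetCard, h])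
  intro u hu v hv huv hadj
  obtain ⟨s, hus, hsA, hs⟩ := exists_subsuperset_card_eq (s := {u, v}) (n := t)
    (insert_subset_iff.2 ⟨hu, singleton_subset_iff.2 hv⟩) (by rw [card_pair huv]; exact ht) htA
  have hind := (mem_indepSubsets.1 (hall ▸ mem_powersetCard.2 ⟨hsA, hs⟩)).2.2
  exact hind (hus (mem_insert_self u {v})) (hus (mem_insert_of_mem (mem_singleton_self v))) huv hadj

theorem indepSubsets_eq_powersetCard {S : Finset V} (hS : G.IsIndepSet (S : Set V)) (t : ℕ) :
    G.indepSubsets S t = S.powersetCard t :=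
  filter_true_of_mem fun _ hs => hS.mono (coe_subset.2 (mem_powersetCard.1 hs).1)

theorem card_indepSubsets_of_isJoinWithEmpty {A S : Finset V} {t : ℕ} (hSA : S ⊆ A)
    (ht : t ≠ 0) (hjoin : G.IsJoinWithEmpty A S) :
    (G.indepSubsets A t).card = (A.card - S.card).choose t + (G.indepSubsets S t).card := by
  have hsplit : G.indepSubsets A t = (A \ S).powersetCard t ∪ G.indepSubsets S t := by
    ext s
    simp only [mem_union, mem_indepSubsets, mem_powersetCard]
    constructor
    · rintro ⟨hsA, hst, hind⟩
      by_cases hsS : s ⊆ S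
      · exact .inr ⟨hsS, hst, hind⟩
      refine .inl ⟨fun v hv => mem_sdiff.2 ⟨hsA hv, fun hvS => ?_⟩, hst⟩
      obtain ⟨u, hus, huS⟩ := not_subset.1 hsS
      have hadj := (hjoin u (mem_sdiff.2 ⟨hsA hus, huS⟩) v (hsA hv)).2 hvS
      exact hind hus hv hadj.ne hadj
    · rintro (⟨hsAS, hst⟩ | ⟨hsS, hst, hind⟩)
      · refine ⟨hsAS.trans sdiff_subset, hst, fun u hu v hv _ hadj => ?_⟩
        exact (mem_sdiff.1 (hsAS hv)).2 ((hjoin u (hsAS hu) v (sdiff_subset (hsAS hv))).1 hadj)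
      · exact ⟨hsS.trans hSA, hst, hind⟩
  have hdisj : Disjoint ((A \ S).powersetCard t) (G.indepSubsets S t) := by
    refine Finset.disjoint_left.2 fun s hs hs' => ?_
    obtain ⟨hsAS, hst⟩ := mem_powersetCard.1 hs
    obtain ⟨v, hv⟩ := card_pos.1 (hst ▸ Nat.pos_of_ne_zero ht)
    exact (mem_sdiff.1 (hsAS hv)).2 ((mem_indepSubsets.1 hs').1 hv)
  rw [hsplit, card_union_of_disjoint hdisj, card_powersetCard, card_sdiff_of_subset hSA]

theorem card_cherries (A : Finset V) :
    (G.cherries A).card = ∑ v ∈ A, (G.nbrsIn A v).card * (G.nonNbrsIn A v).card := by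
  simp only [cherries, card_sigma, card_product]

theorem mem_cherries {A : Finset V} {v u w : V} :
    ⟨v, u, w⟩ ∈ G.cherries A ↔
      v ∈ A ∧ u ∈ A ∧ G.Adj v u ∧ w ∈ A ∧ w ≠ v ∧ ¬G.Adj v w := by
  simp only [cherries, mem_sigma, mem_product, mem_nbrsIn, mem_nonNbrsIn, and_assoc]

theorem span_mem_of_mem_cherries {A : Finset V} {c : Σ _ : V, V × V} (hc : c ∈ G.cherries A) :
    ({c.1, c.2.1, c.2.2} : Finset V) ∈
      (A.powersetCard 3).filter fun s : Finset V => ¬G.IsIndepSet (s : Set V) := by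
  obtain ⟨v, u, w⟩ := c
  obtain ⟨hv, hu, hvu, hw, hwv, hvw⟩ := mem_cherries.1 hc
  have huw : u ≠ w := by rintro rfl; exact hvw hvu
  refine mem_filter.2 ⟨mem_powersetCard.2
    ⟨?_, card_eq_three.2 ⟨v, u, w, hvu.ne, hwv.symm, huw, rfl⟩⟩,
    fun hind => hind (by simp) (by simp) hvu.ne hvu⟩
  intro x hx
  simp only [mem_insert, mem_singleton] at hx
  rcases hx with rfl | rfl | rfl <;> assumption

/-- A cherry is determined by its centre `c.1` and its vertex set, and the three vertices of a
triple cannot all be centres of cherries spanning it: each would have exactly one neighbour in the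
triple, which is impossible by parity. -/
theorem card_filter_cherries_span_le_two (A s : Finset V) :
    #{c ∈ G.cherries A | ({c.1, c.2.1, c.2.2} : Finset V) = s} ≤ 2 := by
  by_contra! h
  obtain ⟨⟨a, b, c⟩, h, ⟨a', b', c'⟩, h', ⟨a'', b'', c''⟩, h'', hne, hne', hne''⟩ :=
    two_lt_card.1 h
  simp only [mem_filter, mem_cherries] at h h' h''
  obtain ⟨⟨-, -, hab, -, hca, hac⟩, rfl⟩ := h
  obtain ⟨⟨-, -, hab', -, hca', hac'⟩, hs'⟩ := h'
  obtain ⟨⟨-, -, hab'', -, hca'', hac''⟩, hs''⟩ := h''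
  simp only [Finset.ext_iff, mem_insert, mem_singleton] at hs' hs''
  simp only [ne_eq, Sigma.mk.inj_iff, heq_eq_eq, Prod.mk.injEq] at hne hne' hne''
  grind [(hs' a'), (hs' b'), (hs' c'), (hs'' a''), (hs'' b''), (hs'' c''), Adj.ne, Adj.symm]

theorem sum_card_nbrsIn_mul_card_nonNbrsIn_add_le (A : Finset V) :
    ∑ v ∈ A, (G.nbrsIn A v).card * (G.nonNbrsIn A v).card + 2 * (G.indepSubsets A 3).card ≤
      2 * A.card.choose 3 := by
  have hcherries := card_le_mul_card_image_of_maps_to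
    (fun c hc => span_mem_of_mem_cherries (G := G) (A := A) hc) 2
    fun s _ => card_filter_cherries_span_le_two A s
  have hsplit := card_filter_add_card_filter_not (s := A.powersetCard 3)
    fun s : Finset V => G.IsIndepSet (s : Set V)
  rw [card_powersetCard] at hsplit
  rw [← card_cherries, indepSubsets]
  omega

theorem card_indepSubsets_three_lt {A : Finset V} {K : ℕ} (hK : 0 < K) (hA : A.Nonempty)
    (hdeg : ∀ v ∈ A, K ≤ (G.nbrsIn A v).card ∧ K ≤ (G.nonNbrsIn A v).card) :
    (G.indepSubsets A 3).card < (A.card - K).choose 3 + K.choose 3 := by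
  obtain ⟨v₀, hv₀⟩ := hA
  have hsize₀ := card_nbrsIn_add_card_nonNbrsIn (G := G) hv₀
  have hdeg₀ := hdeg v₀ hv₀
  obtain ⟨m, hm⟩ : ∃ m, A.card = m + K := ⟨A.card - K, by omega⟩
  have hKm : K < m := by omega
  have hterm : ∀ v ∈ A, K * (m - 1) ≤ (G.nbrsIn A v).card * (G.nonNbrsIn A v).card := by
    intro v hv
    obtain ⟨x, hx⟩ := Nat.exists_eq_add_of_le (hdeg v hv).1
    obtain ⟨y, hy⟩ := Nat.exists_eq_add_of_le (hdeg v hv).2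
    have hm' : m - 1 = K + x + y := by
      have := card_nbrsIn_add_card_nonNbrsIn (G := G) hv
      omega
    rw [hx, hy, hm']
    nlinarith
  have hsum := card_nsmul_le_sum A _ _ hterm
  have hgoodman := sum_card_nbrsIn_mul_card_nonNbrsIn_add_le (G := G) A
  have hnum := Nat.two_mul_choose_add_three_lt hK hKm
  rw [smul_eq_mul, hm] at hsum
  rw [hm] at hgoodman ⊢
  rw [Nat.add_sub_cancel]
  omega

theorem card_indepSubsets_three_le {k : ℕ} {A : Finset V} (hA : k + 3 ≤ A.card)
    (hdeg : ∀ v ∈ A, k ≤ (G.nbrsIn A v).card) :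
    (G.indepSubsets A 3).card ≤ (A.card - k).choose 3 + k.choose 3 := by
  induction k generalizing A with
  | zero => simpa using card_indepSubsets_le A 3
  | succ k ih =>
    by_cases hh : ∃ h ∈ A, (G.nonNbrsIn A h).card ≤ k
    · obtain ⟨h, hhA, hk⟩ := hh
      have hcard := card_erase_of_mem hhA
      have hdel := card_indepSubsets_three_le_erase_add hhA hk
      have hrest := ih (A := A.erase h) (by omega) (le_card_nbrsIn_erase hdeg h)
      have hpascal : (k + 1).choose 3 = k.choose 2 + k.choose 3 := Nat.choose_succ_succ' k 2
      rw [hcard, Nat.sub_sub, add_comm 1 k] at hrest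
      omega
    · push Not at hh
      exact (card_indepSubsets_three_lt k.succ_pos (card_pos.1 (by omega))
        fun v hv => ⟨hdeg v hv, hh v hv⟩).le

theorem IsJoinWithEmpty.insert_of_erase {A S : Finset V} {h : V} {k : ℕ}
    (hjoin : G.IsJoinWithEmpty (A.erase h) S) (hSk : S.card = k)
    (hdeg : ∀ v ∈ A, k + 1 ≤ (G.nbrsIn A v).card) : G.IsJoinWithEmpty A (insert h S) := by
  intro u hu v hv
  simp only [mem_sdiff, mem_insert, not_or] at hu
  obtain ⟨huA, huh, huS⟩ := hu
  have hu' : u ∈ A.erase h \ S := mem_sdiff.2 ⟨mem_erase.2 ⟨huh, huA⟩, huS⟩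
  rcases eq_or_ne v h with rfl | hvh
  · -- otherwise all neighbours of `u` lie in `S`, which has only `k` elements
    simp only [mem_insert_self, iff_true]
    by_contra hnadj
    have hsub : G.nbrsIn A u ⊆ S := fun w hw => by
      obtain ⟨hwA, hadj⟩ := mem_nbrsIn.1 hw
      have hwv : w ≠ v := by rintro rfl; exact hnadj hadj
      exact (hjoin u hu' w (mem_erase.2 ⟨hwv, hwA⟩)).1 hadj
    have := card_le_card hsub
    have := hdeg u huA
    omega
  · rw [hjoin u hu' v (mem_erase.2 ⟨hvh, hv⟩), mem_insert, or_iff_right hvh]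

theorem exists_isJoinWithEmpty_of_card_indepSubsets_three_eq {k : ℕ} {A : Finset V}
    (hA : k + 3 ≤ A.card) (hdeg : ∀ v ∈ A, k ≤ (G.nbrsIn A v).card)
    (heq : (G.indepSubsets A 3).card = (A.card - k).choose 3 + k.choose 3) :
    ∃ S ⊆ A, S.card = k ∧ G.IsJoinWithEmpty A S := by
  induction k generalizing A with
  | zero =>
    have hind := isIndepSet_of_card_indepSubsets_eq (G := G) (t := 3) (by norm_num) (by omega)
      (by simpa using heq)
    refine ⟨∅, empty_subset A, card_empty, fun u hu v hv => ?_⟩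
    simp only [sdiff_empty, notMem_empty, iff_false] at hu ⊢
    exact fun hadj => hind hu hv hadj.ne hadj
  | succ k ih =>
    by_cases hh : ∃ h ∈ A, (G.nonNbrsIn A h).card ≤ k
    · obtain ⟨h, hhA, hk⟩ := hh
      have hcard := card_erase_of_mem hhA
      have hdeg' := le_card_nbrsIn_erase hdeg h
      have hdel := card_indepSubsets_three_le_erase_add hhA hk
      have hrest := card_indepSubsets_three_le (A := A.erase h) (by omega) hdeg'
      have hpascal : (k + 1).choose 3 = k.choose 2 + k.choose 3 := Nat.choose_succ_succ' k 2
      rw [hcard, Nat.sub_sub, add_comm 1 k] at hrest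
      obtain ⟨S, hSA, hSk, hjoin⟩ := ih (A := A.erase h) (by omega) hdeg'
        (by rw [hcard, Nat.sub_sub, add_comm 1 k]; omega)
      have hhS : h ∉ S := fun hS => by simpa using hSA hS
      exact ⟨insert h S, insert_subset hhA (hSA.trans (erase_subset h A)),
        by rw [card_insert_of_notMem hhS, hSk], hjoin.insert_of_erase hSk hdeg⟩
    · push Not at hh
      exact absurd heq (card_indepSubsets_three_lt k.succ_pos (card_pos.1 (by omega))
        fun v hv => ⟨hdeg v hv, hh v hv⟩).ne

end Counting

section CompleteBipartite

variable {V : Type*} (G : SimpleGraph V)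

def IsCompleteBipartiteWith (S : Finset V) : Prop :=
  ∀ u v, G.Adj u v ↔ (u ∈ S ↔ v ∉ S)

variable {G}

theorem isCompleteBipartiteWith_iff [Fintype V] [DecidableEq V] {S : Finset V} :
    G.IsCompleteBipartiteWith S ↔
      G.IsIndepSet (S : Set V) ∧ G.IsJoinWithEmpty univ S := by
  constructor
  · intro h
    refine ⟨fun u hu v hv _ hadj => ((h u v).1 hadj).1 hu hv, fun u hu v _ => ?_⟩
    rw [h u v, iff_false_left (mem_sdiff.1 hu).2, not_not]
  · rintro ⟨hind, hjoin⟩ u v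
    by_cases hu : u ∈ S
    · by_cases hv : v ∈ S
      · simp only [hu, hv, not_true_eq_false, iff_false]
        exact fun hadj => hind hu hv hadj.ne hadj
      · simp only [hu, hv, not_false_eq_true, iff_true]
        exact ((hjoin v (by simpa) u (mem_univ u)).2 hu).symm
    · simpa [hu] using hjoin u (by simpa) v (mem_univ v)

theorem nonempty_iso_completeBipartiteGraph_iff [Fintype V] [DecidableEq V] {α β : Type*}
    [Fintype α] [Fintype β] (hcard : Fintype.card V = Fintype.card α + Fintype.card β) :
    Nonempty (G ≃g completeBipartiteGraph α β) ↔
      ∃ S : Finset V, S.card = Fintype.card α ∧ G.IsCompleteBipartiteWith S := by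
  constructor
  · rintro ⟨f⟩
    let left : α ↪ V := ⟨f.symm ∘ Sum.inl, f.symm.injective.comp Sum.inl_injective⟩
    have hleft : ∀ u, u ∈ univ.map left ↔ (f u).isLeft := by
      intro u
      simp only [mem_map, mem_univ, true_and]
      constructor
      · rintro ⟨a, rfl⟩
        simp [left]
      · intro h
        obtain ⟨a, ha⟩ := Sum.isLeft_iff.1 h
        exact ⟨a, by simp [left, ← ha]⟩
    refine ⟨univ.map left, by simp, fun u v => ?_⟩
    rw [← f.map_adj_iff, hleft, hleft]
    rcases f u with a | b <;> rcases f v with a' | b' <;> simp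
  · rintro ⟨S, hS, hadj⟩
    have hSα : Fintype.card S = Fintype.card α := by rw [Fintype.card_coe, hS]
    have hSβ : Fintype.card {v // v ∉ S} = Fintype.card β := by
      rw [Fintype.card_subtype_compl, Fintype.card_coe, hS]
      omega
    let e : G ≃g completeBipartiteGraph S {v // v ∉ S} :=
      { toEquiv := (Equiv.sumCompl (· ∈ S)).symm
        map_rel_iff' := fun {u v} => by
          rw [hadj u v]
          by_cases hu : u ∈ S <;> by_cases hv : v ∈ S <;>
            simp [Equiv.sumCompl_symm_apply_of_pos, Equiv.sumCompl_symm_apply_of_neg, hu, hv] }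
    exact ⟨e.trans (completeBipartiteGraphCongr (Fintype.equivOfCardEq hSα)
      (Fintype.equivOfCardEq hSβ))⟩

end CompleteBipartite

end SimpleGraph

theorem gdeg_eq_card_nbrsIn {V : Type*} [Fintype V] (G : SimpleGraph V) [DecidableRel G.Adj]
    (v : V) : gdeg G v = (G.nbrsIn univ v).card := by
  rw [gdeg, Set.ncard_eq_toFinset_card', ← neighborFinset_def, neighborFinset_eq_filter]
  rfl

theorem indepT_eq_card_indepSubsets {V : Type*} [Fintype V] [DecidableEq V] (G : SimpleGraph V)
    [DecidableRel G.Adj] (t : ℕ) : indepT G t = (G.indepSubsets univ t).card := by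
  rw [indepT, Nat.card_eq_fintype_card, Fintype.card_subtype]
  congr 1
  ext s
  simp only [mem_filter, mem_univ, true_and, mem_indepSubsets, subset_univ]
  exact and_congr_right fun _ =>
    ⟨fun h u hu v hv _ => h u hu v hv, fun h u hu v hv hadj => h hu hv hadj.ne hadj⟩

/-- For `n ≥ 6` and an `n`-vertex graph `G` of minimum degree at least 3,
`i_3(G) = C(n-3,3) + 1` iff `G` is isomorphic to `K_{3,n-3}`. -/
theorem stmt_6 {V : Type*} [Fintype V] (G : SimpleGraph V) (n : ℕ)
    (hn : Fintype.card V = n) (h6 : 6 ≤ n)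
    (hmin : ∀ v, 3 ≤ gdeg G v) :
    indepT G 3 = (n - 3).choose 3 + 1 ↔
      Nonempty (G ≃g completeBipartiteGraph (Fin 3) (Fin (n - 3))) := by
  classical
  subst hn
  have hdeg : ∀ v ∈ (univ : Finset V), 3 ≤ (G.nbrsIn univ v).card :=
    fun v _ => gdeg_eq_card_nbrsIn G v ▸ hmin v
  rw [indepT_eq_card_indepSubsets,
    nonempty_iso_completeBipartiteGraph_iff (by rw [Fintype.card_fin, Fintype.card_fin]; omega),
    Fintype.card_fin]
  constructor
  · intro heq
    obtain ⟨S, -, hS, hjoin⟩ := exists_isJoinWithEmpty_of_card_indepSubsets_three_eq (k := 3)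
      (by rwa [card_univ]) hdeg (by rwa [card_univ])
    rw [card_indepSubsets_of_isJoinWithEmpty (subset_univ S) three_ne_zero hjoin, card_univ,
      hS] at heq
    have hind := isIndepSet_of_card_indepSubsets_eq (G := G) (t := 3) (by norm_num) hS.ge
      (by rw [hS, Nat.choose_self]; omega)
    exact ⟨S, hS, isCompleteBipartiteWith_iff.2 ⟨hind, hjoin⟩⟩
  · rintro ⟨S, hS, hbip⟩
    obtain ⟨hind, hjoin⟩ := isCompleteBipartiteWith_iff.1 hbip
    rw [card_indepSubsets_of_isJoinWithEmpty (subset_univ S) three_ne_zero hjoin,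
      indepSubsets_eq_powersetCard hind, card_powersetCard, card_univ, hS]
    rfl
end
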